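/- arXiv:1510.04093 — 2 statements merged into one kernel-verified Lean document; each statement's English description precedes it below -/
import Mathlib

section
/- Let d ≥ 3, let A = {|a_1⟩,…,|a_d⟩} and B = {|b_1⟩,…,|b_d⟩} be orthonormal bases of ℂ^d, and let 0 < α ≤ 1 + 2/log₂(d−1) with α ≠ 1. Then the infimum over all density matrices ρ of H_α(p_ρ^A) + H_α(q_ρ^{A→B}) equals min_{1≤i≤d} (1/(1−α)) log₂(Σ_{j=1}^d |⟨a_i|b_j⟩|^{2α}), and the infimum is attained at ρ = |a_i⟩⟨a_i| for a minimizing index i. -/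
open Matrix
open scoped BigOperators ComplexOrder

/-- The inner product ⟨x|y⟩ on ℂ^d. -/
noncomputable def qinner {d : ℕ} (x y : Fin d → ℂ) : ℂ := star x ⬝ᵥ y

/-- `a` is an orthonormal basis of ℂ^d (d orthonormal vectors). -/
def IsONB {d : ℕ} (a : Fin d → (Fin d → ℂ)) : Prop :=
  ∀ i j, qinner (a i) (a j) = if i = j then 1 else 0

/-- Measurement distribution p_ρ^B(j) = ⟨b_j|ρ|b_j⟩. -/
noncomputable def probB {d : ℕ} (ρ : Matrix (Fin d) (Fin d) ℂ)
    (b : Fin d → (Fin d → ℂ)) (j : Fin d) : ℝ :=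
  (qinner (b j) (ρ *ᵥ b j)).re

/-- Distribution of a B-measurement after a non-selective A-measurement:
q_ρ^{A→B}(j) = Σ_i ⟨a_i|ρ|a_i⟩ |⟨a_i|b_j⟩|². -/
noncomputable def probAB {d : ℕ} (ρ : Matrix (Fin d) (Fin d) ℂ)
    (a b : Fin d → (Fin d → ℂ)) (j : Fin d) : ℝ :=
  ∑ i, probB ρ a i * ‖qinner (a i) (b j)‖ ^ 2

/-- Tsallis entropy of order α. -/
noncomputable def tsallis {d : ℕ} (α : ℝ) (p : Fin d → ℝ) : ℝ :=
  (1 / (1 - α)) * ((∑ j, p j ^ α) - 1)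

/-- Rank-one projector |v⟩⟨v|. -/
noncomputable def proj {d : ℕ} (v : Fin d → ℂ) : Matrix (Fin d) (Fin d) ℂ :=
  vecMulVec v (star v)


/-- Rényi entropy of order α (base-2 logarithm). -/
noncomputable def renyi {d : ℕ} (α : ℝ) (p : Fin d → ℝ) : ℝ :=
  (1 / (1 - α)) * Real.logb 2 (∑ j, p j ^ α)

/-!
Let `C i = (|⟨a_i|b_j⟩|²)_j`, the `B`-distribution of the basis state `|a_i⟩`. For
`ρ = |a_i⟩⟨a_i|` the `A`-distribution is a point mass, of entropy `0`, and `q_ρ = C i`, which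
gives the value `H_α(C i)`. For a general state, `q_ρ = ∑ i, p_ρ^A(i) • C i` is a mixture of the
rows `C i`. Rényi entropy of every order `α > 0` is quasiconcave on the probability simplex: its
superlevel sets are superlevel sets of the concave power sum `∑ j, p j ^ α` when `α < 1`, and
sublevel sets of the convex one when `α > 1`. Hence `H_α(q_ρ) ≥ min_i H_α(C i)`, and
`H_α(p_ρ^A) ≥ 0` by the same argument applied to point masses.
-/

open Finset

theorem QuasiconcaveOn.le_map_sum {𝕜 E β ι : Type*} [Field 𝕜] [LinearOrder 𝕜]
    [IsStrictOrderedRing 𝕜] [AddCommGroup E] [Module 𝕜 E] [Preorder β] {s : Set E} {f : E → β}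
    (hf : QuasiconcaveOn 𝕜 s f) {t : Finset ι} {w : ι → 𝕜} {p : ι → E} {r : β}
    (h₀ : ∀ i ∈ t, 0 ≤ w i) (h₁ : ∑ i ∈ t, w i = 1) (hp : ∀ i ∈ t, p i ∈ s)
    (hr : ∀ i ∈ t, r ≤ f (p i)) :
    r ≤ f (∑ i ∈ t, w i • p i) :=
  ((hf r).sum_mem h₀ h₁ fun i hi => ⟨hp i hi, hr i hi⟩).2

section PowerSum

variable {ι : Type*} [Fintype ι] {α : ℝ}

theorem concaveOn_sum_rpow (hα₀ : 0 ≤ α) (hα₁ : α ≤ 1) :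
    ConcaveOn ℝ (Set.Ici 0) fun p : ι → ℝ => ∑ j, p j ^ α := by
  refine ⟨convex_Ici 0, fun p hp q hq s t hs ht hst => ?_⟩
  simp only [smul_eq_mul, mul_sum, ← sum_add_distrib, Pi.add_apply, Pi.smul_apply]
  exact sum_le_sum fun j _ => (Real.concaveOn_rpow hα₀ hα₁).2 (hp j) (hq j) hs ht hst

theorem convexOn_sum_rpow (hα : 1 ≤ α) :
    ConvexOn ℝ (Set.Ici 0) fun p : ι → ℝ => ∑ j, p j ^ α := by
  refine ⟨convex_Ici 0, fun p hp q hq s t hs ht hst => ?_⟩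
  simp only [smul_eq_mul, mul_sum, ← sum_add_distrib, Pi.add_apply, Pi.smul_apply]
  exact sum_le_sum fun j _ => (convexOn_rpow hα).2 (hp j) (hq j) hs ht hst

theorem sum_rpow_pos_of_mem_stdSimplex {p : ι → ℝ} (hp : p ∈ stdSimplex ℝ ι) :
    0 < ∑ j, p j ^ α := by
  obtain ⟨j, -, hj⟩ := exists_ne_zero_of_sum_ne_zero (hp.2.trans_ne one_ne_zero)
  exact sum_pos' (fun k _ => Real.rpow_nonneg (hp.1 k) α)
    ⟨j, mem_univ j, Real.rpow_pos_of_pos ((hp.1 j).lt_of_ne' hj) α⟩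

end PowerSum

section Renyi

variable {d : ℕ} {α : ℝ}

theorem renyi_quasiconcaveOn (hα : 0 < α) (hα1 : α ≠ 1) :
    QuasiconcaveOn ℝ (stdSimplex ℝ (Fin d)) (renyi α) := by
  intro m
  have hS := convex_stdSimplex ℝ (Fin d)
  have hSI : stdSimplex ℝ (Fin d) ⊆ Set.Ici 0 := fun _ hp => hp.1
  rcases hα1.lt_or_gt with hlt | hgt
  · have hlevel : {p ∈ stdSimplex ℝ (Fin d) | m ≤ renyi α p}
        = {p ∈ stdSimplex ℝ (Fin d) | 2 ^ (m * (1 - α)) ≤ ∑ j, p j ^ α} := by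
      ext p
      refine and_congr_right fun hp => ?_
      rw [renyi, one_div_mul_eq_div, le_div_iff₀ (by linarith),
        Real.le_logb_iff_rpow_le one_lt_two (sum_rpow_pos_of_mem_stdSimplex hp)]
    rw [hlevel]
    exact ((concaveOn_sum_rpow hα.le hlt.le).subset hSI hS).quasiconcaveOn _
  · have hlevel : {p ∈ stdSimplex ℝ (Fin d) | m ≤ renyi α p}
        = {p ∈ stdSimplex ℝ (Fin d) | ∑ j, p j ^ α ≤ 2 ^ (m * (1 - α))} := by
      ext p
      refine and_congr_right fun hp => ?_
      rw [renyi, one_div_mul_eq_div, le_div_iff_of_neg (by linarith),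
        Real.logb_le_iff_le_rpow one_lt_two (sum_rpow_pos_of_mem_stdSimplex hp)]
    rw [hlevel]
    exact ((convexOn_sum_rpow hgt.le).subset hSI hS).quasiconvexOn _

theorem renyi_single (hα : 0 < α) (i : Fin d) : renyi α (Pi.single i 1) = 0 := by
  have hpow : ∀ j, (Pi.single i 1 : Fin d → ℝ) j ^ α = (Pi.single i 1 : Fin d → ℝ) j := by
    intro j
    rcases eq_or_ne j i with rfl | h
    · simp
    · simp [h, Real.zero_rpow hα.ne']
  simp [renyi, hpow]

theorem renyi_nonneg (hα : 0 < α) (hα1 : α ≠ 1) {p : Fin d → ℝ}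
    (hp : p ∈ stdSimplex ℝ (Fin d)) : 0 ≤ renyi α p := by
  have hvertices : p = ∑ i, p i • Pi.single i 1 := by
    ext j
    simp [Pi.single_apply]
  rw [hvertices]
  exact (renyi_quasiconcaveOn hα hα1).le_map_sum (fun i _ => hp.1 i) hp.2
    (fun i _ => single_mem_stdSimplex ℝ i) fun i _ => (renyi_single hα i).ge

end Renyi

section Measurement

variable {d : ℕ}

theorem IsONB.conjTranspose_mul_self {a : Fin d → Fin d → ℂ} (ha : IsONB a) :
    (of fun k i => a i k)ᴴ * of (fun k i => a i k) = 1 := by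
  ext i j
  simpa [mul_apply, one_apply, qinner, dotProduct] using ha i j

theorem IsONB.sum_qinner_mulVec_self {a : Fin d → Fin d → ℂ} (ha : IsONB a)
    (ρ : Matrix (Fin d) (Fin d) ℂ) : ∑ i, qinner (a i) (ρ *ᵥ a i) = ρ.trace := by
  set V : Matrix (Fin d) (Fin d) ℂ := of fun k i => a i k
  calc ∑ i, qinner (a i) (ρ *ᵥ a i) = (Vᴴ * ρ * V).trace := by
        simp [V, trace, mul_apply, qinner, dotProduct, mulVec, mul_sum, mul_assoc]
    _ = (ρ * (V * Vᴴ)).trace := by rw [Matrix.mul_assoc, trace_mul_comm, Matrix.mul_assoc]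
    _ = ρ.trace := by rw [mul_eq_one_comm.mp ha.conjTranspose_mul_self, Matrix.mul_one]

theorem probB_mem_stdSimplex {ρ : Matrix (Fin d) (Fin d) ℂ} (hρ : ρ.PosSemidef)
    (htr : ρ.trace = 1) {c : Fin d → Fin d → ℂ} (hc : IsONB c) :
    probB ρ c ∈ stdSimplex ℝ (Fin d) := by
  refine ⟨fun j => (Complex.nonneg_iff.mp (hρ.dotProduct_mulVec_nonneg (c j))).1, ?_⟩
  change ∑ j, (qinner (c j) (ρ *ᵥ c j)).re = 1
  rw [← Complex.re_sum, hc.sum_qinner_mulVec_self, htr, Complex.one_re]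

theorem posSemidef_proj (v : Fin d → ℂ) : (proj v).PosSemidef :=
  posSemidef_vecMulVec_self_star v

theorem IsONB.trace_proj {a : Fin d → Fin d → ℂ} (ha : IsONB a) (i : Fin d) :
    (proj (a i)).trace = 1 := by
  rw [proj, trace_vecMulVec, dotProduct_comm, ← qinner, ha i i, if_pos rfl]

theorem proj_mulVec (v y : Fin d → ℂ) : proj v *ᵥ y = qinner v y • v := by
  ext k
  simp [proj, mulVec, dotProduct, vecMulVec_apply, qinner, mul_sum, mul_comm, mul_left_comm]

theorem probB_proj (v : Fin d → ℂ) (c : Fin d → Fin d → ℂ) (j : Fin d) :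
    probB (proj v) c j = ‖qinner v (c j)‖ ^ 2 := by
  rw [probB, proj_mulVec, qinner, dotProduct_smul, smul_eq_mul, star_dotProduct, ← qinner,
    Complex.star_def, Complex.mul_conj']
  norm_cast

theorem IsONB.probB_proj_self {a : Fin d → Fin d → ℂ} (ha : IsONB a) (i : Fin d) :
    probB (proj (a i)) a = Pi.single i 1 := by
  ext k
  rw [probB_proj, ha i k, Pi.single_apply]
  rcases eq_or_ne k i with rfl | h
  · simp
  · simp [h, Ne.symm h]

theorem probAB_eq_sum_smul (ρ : Matrix (Fin d) (Fin d) ℂ) (a b : Fin d → Fin d → ℂ) :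
    probAB ρ a b = ∑ i, probB ρ a i • probB (proj (a i)) b := by
  ext j
  simp [probAB, probB_proj]

theorem renyi_probB_proj (α : ℝ) (v : Fin d → ℂ) (c : Fin d → Fin d → ℂ) :
    renyi α (probB (proj v) c) =
      (1 / (1 - α)) * Real.logb 2 (∑ j, ‖qinner v (c j)‖ ^ (2 * α)) := by
  simp only [renyi, probB_proj, Real.rpow_mul (norm_nonneg _)]
  norm_cast

variable {a b : Fin d → Fin d → ℂ} {α : ℝ}

theorem IsONB.renyi_add_renyi_proj (ha : IsONB a) (hα : 0 < α) (i : Fin d) :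
    renyi α (probB (proj (a i)) a) + renyi α (probAB (proj (a i)) a b)
      = renyi α (probB (proj (a i)) b) := by
  rw [probAB_eq_sum_smul, ha.probB_proj_self, renyi_single hα, zero_add]
  simp [Pi.single_apply]

theorem IsONB.le_renyi_probAB (ha : IsONB a) (hb : IsONB b) (hα : 0 < α) (hα1 : α ≠ 1)
    {ρ : Matrix (Fin d) (Fin d) ℂ} (hρ : ρ.PosSemidef) (htr : ρ.trace = 1) {m : ℝ}
    (hm : ∀ i, m ≤ renyi α (probB (proj (a i)) b)) : m ≤ renyi α (probAB ρ a b) := by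
  have hp := probB_mem_stdSimplex hρ htr ha
  rw [probAB_eq_sum_smul]
  exact (renyi_quasiconcaveOn hα hα1).le_map_sum (fun i _ => hp.1 i) hp.2
    (fun i _ => probB_mem_stdSimplex (posSemidef_proj _) (ha.trace_proj i) hb) fun i _ => hm i

end Measurement

theorem renyi_succ_EUR_general {d : ℕ} (hd : 3 ≤ d) (a b : Fin d → (Fin d → ℂ))
    (ha : IsONB a) (hb : IsONB b) (α : ℝ) (hα : 0 < α)
    (hα1 : α ≠ 1) :
    IsLeast {x : ℝ | ∃ ρ : Matrix (Fin d) (Fin d) ℂ, ρ.PosSemidef ∧ ρ.trace = 1 ∧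
        x = renyi α (probB ρ a) + renyi α (probAB ρ a b)}
      (⨅ i : Fin d, (1 / (1 - α)) * Real.logb 2 (∑ j, ‖qinner (a i) (b j)‖ ^ (2 * α))) ∧
    ∃ i : Fin d,
      (∀ k : Fin d, (1 / (1 - α)) * Real.logb 2 (∑ j, ‖qinner (a i) (b j)‖ ^ (2 * α))
          ≤ (1 / (1 - α)) * Real.logb 2 (∑ j, ‖qinner (a k) (b j)‖ ^ (2 * α))) ∧
      renyi α (probB (proj (a i)) a) + renyi α (probAB (proj (a i)) a b)
        = ⨅ k : Fin d, (1 / (1 - α)) * Real.logb 2 (∑ j, ‖qinner (a k) (b j)‖ ^ (2 * α)) := by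
  simp only [← renyi_probB_proj]
  have : Nonempty (Fin d) := ⟨⟨0, by omega⟩⟩
  obtain ⟨i, -, hi⟩ := exists_min_image univ (fun k => renyi α (probB (proj (a k)) b))
    univ_nonempty
  replace hi : ∀ k, renyi α (probB (proj (a i)) b) ≤ renyi α (probB (proj (a k)) b) :=
    fun k => hi k (mem_univ k)
  have hinf : ⨅ k, renyi α (probB (proj (a k)) b) = renyi α (probB (proj (a i)) b) :=
    le_antisymm (ciInf_le (Finite.bddBelow_range _) i) (le_ciInf hi)
  rw [hinf]
  refine ⟨⟨⟨proj (a i), posSemidef_proj _, ha.trace_proj i,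
    (ha.renyi_add_renyi_proj hα i).symm⟩, ?_⟩, i, hi, ha.renyi_add_renyi_proj hα i⟩
  rintro _ ⟨ρ, hρ, htr, rfl⟩
  have hA := renyi_nonneg hα hα1 (probB_mem_stdSimplex hρ htr ha)
  linarith [ha.le_renyi_probAB hb hα hα1 hρ htr hi]

theorem renyi_succ_EUR {d : ℕ} (hd : 3 ≤ d) (a b : Fin d → (Fin d → ℂ))
    (ha : IsONB a) (hb : IsONB b) (α : ℝ) (hα : 0 < α)
    (hα' : α ≤ 1 + 2 / Real.logb 2 ((d : ℝ) - 1)) (hα1 : α ≠ 1) :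
    IsLeast {x : ℝ | ∃ ρ : Matrix (Fin d) (Fin d) ℂ, ρ.PosSemidef ∧ ρ.trace = 1 ∧
        x = renyi α (probB ρ a) + renyi α (probAB ρ a b)}
      (⨅ i : Fin d, (1 / (1 - α)) * Real.logb 2 (∑ j, ‖qinner (a i) (b j)‖ ^ (2 * α))) ∧
    ∃ i : Fin d,
      (∀ k : Fin d, (1 / (1 - α)) * Real.logb 2 (∑ j, ‖qinner (a i) (b j)‖ ^ (2 * α))
          ≤ (1 / (1 - α)) * Real.logb 2 (∑ j, ‖qinner (a k) (b j)‖ ^ (2 * α))) ∧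
      renyi α (probB (proj (a i)) a) + renyi α (probAB (proj (a i)) a b)
        = ⨅ k : Fin d, (1 / (1 - α)) * Real.logb 2 (∑ j, ‖qinner (a k) (b j)‖ ^ (2 * α)) :=
  renyi_succ_EUR_general hd a b ha hb α hα hα1
end

section
/- Let A^(1),…,A^(N) be N orthonormal bases {|a^(i)_j⟩}_{j=1}^d of ℂ^d. Suppose there is a unit vector φ* attaining sup_{‖φ‖=1} Σ_{i,j} |⟨φ|a^(i)_j⟩|⁴ such that the value Σ_j |⟨φ*|a^(i)_j⟩|⁴ is the same for every i = 1,…,N. Set c₂ = inf_{‖φ‖=1} (1/N) Σ_{i=1}^N H₂((|⟨φ|a^(i)_j⟩|²)_j). Then for every POVM {M_k} and density matrices {σ_k}, the average fidelity F_S ≤ 2^{−c₂}; equivalently Q(A^(1),…,A^(N)) = 1 − F_S^max ≥ 1 − 2^{−c₂}. -/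
open Matrix
open scoped BigOperators ComplexOrder

/-! For a positive semidefinite `A = Σ_l λ_l |e_l⟩⟨e_l|`, Cauchy–Schwarz with weights `λ_l` gives
`Σ_{i,j} ⟨a^(i)_j|A|a^(i)_j⟩² ≤ (tr A)² T`, where `T = Σ_{i,j} |⟨φ*|a^(i)_j⟩|⁴` is the maximal
collision sum. A second Cauchy–Schwarz bounds the `k`-th term of `N d F_S` by `tr M_k · T`, and
`Σ_k tr M_k = d` yields `F_S ≤ T / N`. As all bases have the same collision sum `c` at `φ*`,
`T / N = c = 2^(log₂ c)`, and `-log₂ c` is the averaged Rényi-2 entropy at `φ*`, hence `≥ c₂`. -/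

section

variable {d : ℕ}

lemma qinner_swap (x y : Fin d → ℂ) : qinner y x = star (qinner x y) := by
  rw [qinner, qinner, star_dotProduct]

lemma norm_qinner_swap (x y : Fin d → ℂ) : ‖qinner y x‖ = ‖qinner x y‖ := by
  rw [qinner_swap, norm_star]

lemma qinner_transpose_apply (V : Matrix (Fin d) (Fin d) ℂ) (l l' : Fin d) :
    qinner (Vᵀ l) (Vᵀ l') = (Vᴴ * V) l l' := by
  simp [qinner, dotProduct, mul_apply]

lemma re_qinner_mul_diagonal_mul_conjTranspose_mulVec (V : Matrix (Fin d) (Fin d) ℂ)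
    (D : Fin d → ℝ) (x : Fin d → ℂ) :
    (qinner x ((V * diagonal (RCLike.ofReal ∘ D) * Vᴴ) *ᵥ x)).re =
      ∑ l, D l * ‖qinner (Vᵀ l) x‖ ^ 2 := by
  have hy : ∀ l, qinner (Vᵀ l) x = (Vᴴ *ᵥ x) l := fun l => by
    simp [qinner, dotProduct, mulVec]
  have h : qinner x ((V * diagonal (RCLike.ofReal ∘ D) * Vᴴ) *ᵥ x) =
      star (Vᴴ *ᵥ x) ⬝ᵥ (diagonal (RCLike.ofReal ∘ D) *ᵥ (Vᴴ *ᵥ x)) := by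
    rw [qinner, ← mulVec_mulVec, ← mulVec_mulVec, dotProduct_mulVec, star_mulVec,
      conjTranspose_conjTranspose]
  simp only [h, hy, dotProduct, mulVec_diagonal, Complex.re_sum]
  refine Finset.sum_congr rfl fun l _ => ?_
  rw [Pi.star_apply, RCLike.star_def, mul_left_comm, RCLike.conj_mul, Function.comp_apply]
  norm_cast

lemma Matrix.IsHermitian.re_qinner_mulVec {A : Matrix (Fin d) (Fin d) ℂ} (hA : A.IsHermitian)
    (x : Fin d → ℂ) :
    (qinner x (A *ᵥ x)).re = ∑ l, hA.eigenvalues l * ‖qinner (hA.eigenvectorBasis l) x‖ ^ 2 := by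
  conv_lhs => rw [hA.spectral_theorem, Unitary.conjStarAlgAut_apply, star_eq_conjTranspose]
  exact re_qinner_mul_diagonal_mul_conjTranspose_mulVec _ _ x

lemma Matrix.IsHermitian.qinner_eigenvectorBasis_self {A : Matrix (Fin d) (Fin d) ℂ}
    (hA : A.IsHermitian) (l : Fin d) :
    qinner (hA.eigenvectorBasis l) (hA.eigenvectorBasis l) = 1 := by
  rw [← eigenvectorUnitary_transpose_apply, qinner_transpose_apply, ← star_eq_conjTranspose,
    Unitary.coe_star_mul_self, one_apply_eq]

lemma IsONB.sum_norm_qinner_sq {b : Fin d → Fin d → ℂ} (hb : IsONB b) (x : Fin d → ℂ) :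
    ∑ j, ‖qinner x (b j)‖ ^ 2 = (qinner x x).re := by
  set V : Matrix (Fin d) (Fin d) ℂ := (of b)ᵀ
  have hV : V * Vᴴ = 1 := mul_eq_one_comm.mp <| by
    ext j j'
    rw [← qinner_transpose_apply, one_apply]
    exact hb j j'
  have := re_qinner_mul_diagonal_mul_conjTranspose_mulVec V 1 x
  simp only [Function.comp_def, Pi.one_apply, RCLike.ofReal_one, diagonal_one, mul_one, hV,
    one_mulVec, one_mul] at this
  rw [this]
  exact Finset.sum_congr rfl fun j _ => by rw [norm_qinner_swap]; rfl

lemma IsONB.sum_norm_qinner_pow_four_le_one {b : Fin d → Fin d → ℂ} (hb : IsONB b)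
    {φ : Fin d → ℂ} (hφ : qinner φ φ = 1) : ∑ j, ‖qinner φ (b j)‖ ^ 4 ≤ 1 := by
  calc ∑ j, ‖qinner φ (b j)‖ ^ 4 = ∑ j, (‖qinner φ (b j)‖ ^ 2) ^ 2 := by simp only [← pow_mul]
    _ ≤ (∑ j, ‖qinner φ (b j)‖ ^ 2) ^ 2 :=
      Finset.sum_sq_le_sq_sum_of_nonneg fun j _ => by positivity
    _ = 1 := by rw [hb.sum_norm_qinner_sq, hφ, Complex.one_re, one_pow]

lemma IsONB.sum_norm_qinner_pow_four_pos {b : Fin d → Fin d → ℂ} (hb : IsONB b)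
    {φ : Fin d → ℂ} (hφ : qinner φ φ = 1) : 0 < ∑ j, ‖qinner φ (b j)‖ ^ 4 := by
  have hsum : ∑ j, ‖qinner φ (b j)‖ ^ 2 ≠ 0 := by
    rw [hb.sum_norm_qinner_sq, hφ, Complex.one_re]; exact one_ne_zero
  obtain ⟨j, -, hj⟩ := Finset.exists_ne_zero_of_sum_ne_zero hsum
  exact Finset.sum_pos' (fun j _ => by positivity)
    ⟨j, Finset.mem_univ j, pow_pos (norm_pos_iff.mpr fun h => hj (by simp [h])) 4⟩

variable {ι : Type*} [Fintype ι] {v : ι → Fin d → ℂ} {T : ℝ}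

lemma Matrix.PosSemidef.sum_sq_re_qinner_mulVec_le {A : Matrix (Fin d) (Fin d) ℂ}
    (hA : A.PosSemidef) (hT : ∀ φ : Fin d → ℂ, qinner φ φ = 1 → ∑ i, ‖qinner φ (v i)‖ ^ 4 ≤ T) :
    ∑ i, (qinner (v i) (A *ᵥ v i)).re ^ 2 ≤ A.trace.re ^ 2 * T := by
  set g := hA.1.eigenvalues
  set e := hA.1.eigenvectorBasis
  have hg : ∀ l, 0 ≤ g l := hA.eigenvalues_nonneg
  have htr : A.trace.re = ∑ l, g l := by simp [hA.1.trace_eq_sum_eigenvalues, g]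
  have cauchy_schwarz : ∀ i, (qinner (v i) (A *ᵥ v i)).re ^ 2 ≤
      (∑ l, g l) * ∑ l, g l * ‖qinner (e l) (v i)‖ ^ 4 := fun i => by
    rw [hA.1.re_qinner_mulVec]
    exact Finset.sum_sq_le_sum_mul_sum_of_sq_le_mul _ (fun l _ => hg l)
      (fun l _ => mul_nonneg (hg l) (by positivity)) (fun l _ => le_of_eq (by ring))
  calc ∑ i, (qinner (v i) (A *ᵥ v i)).re ^ 2
      ≤ ∑ i, (∑ l, g l) * ∑ l, g l * ‖qinner (e l) (v i)‖ ^ 4 :=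
        Finset.sum_le_sum fun i _ => cauchy_schwarz i
    _ = (∑ l, g l) * ∑ l, g l * ∑ i, ‖qinner (e l) (v i)‖ ^ 4 := by
      simp_rw [Finset.mul_sum]
      rw [Finset.sum_comm]
    _ ≤ (∑ l, g l) * ∑ l, g l * T := by
      gcongr with l
      · exact Finset.sum_nonneg fun l _ => hg l
      · exact hg l
      · exact hT _ (hA.1.qinner_eigenvectorBasis_self l)
    _ = A.trace.re ^ 2 * T := by rw [← Finset.sum_mul, htr]; ring

lemma sum_re_qinner_mulVec_mul_le {M σ : Matrix (Fin d) (Fin d) ℂ}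
    (hT : ∀ φ : Fin d → ℂ, qinner φ φ = 1 → ∑ i, ‖qinner φ (v i)‖ ^ 4 ≤ T)
    (hM : M.PosSemidef) (hσ : σ.PosSemidef) (hσtr : σ.trace = 1) :
    ∑ i, (qinner (v i) (M *ᵥ v i)).re * (qinner (v i) (σ *ᵥ v i)).re ≤ M.trace.re * T := by
  have hMv := hM.sum_sq_re_qinner_mulVec_le hT
  have hσv := hσ.sum_sq_re_qinner_mulVec_le hT
  rw [hσtr, Complex.one_re, one_pow, one_mul] at hσv
  have hT0 : 0 ≤ T := (Finset.sum_nonneg fun _ _ => sq_nonneg _).trans hσv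
  have htr0 : 0 ≤ M.trace.re := (Complex.nonneg_iff.mp hM.trace_nonneg).1
  refine le_of_sq_le_sq ?_ (mul_nonneg htr0 hT0)
  calc (∑ i, (qinner (v i) (M *ᵥ v i)).re * (qinner (v i) (σ *ᵥ v i)).re) ^ 2
      ≤ (∑ i, (qinner (v i) (M *ᵥ v i)).re ^ 2) * ∑ i, (qinner (v i) (σ *ᵥ v i)).re ^ 2 :=
        Finset.sum_mul_sq_le_sq_mul_sq _ _ _
    _ ≤ (M.trace.re ^ 2 * T) * T :=
        mul_le_mul hMv hσv (Finset.sum_nonneg fun _ _ => sq_nonneg _) (by positivity)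
    _ = (M.trace.re * T) ^ 2 := by ring

lemma sum_sum_re_qinner_mulVec_mul_le {κ : Type*} [Fintype κ]
    {M σ : κ → Matrix (Fin d) (Fin d) ℂ}
    (hT : ∀ φ : Fin d → ℂ, qinner φ φ = 1 → ∑ i, ‖qinner φ (v i)‖ ^ 4 ≤ T)
    (hM : ∀ k, (M k).PosSemidef) (hMsum : ∑ k, M k = 1)
    (hσ : ∀ k, (σ k).PosSemidef) (hσtr : ∀ k, (σ k).trace = 1) :
    ∑ k, ∑ i, (qinner (v i) (M k *ᵥ v i)).re * (qinner (v i) (σ k *ᵥ v i)).re ≤ d * T := by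
  calc _ ≤ ∑ k, (M k).trace.re * T :=
        Finset.sum_le_sum fun k _ => sum_re_qinner_mulVec_mul_le hT (hM k) (hσ k) (hσtr k)
    _ = d * T := by
      rw [← Finset.sum_mul, ← Complex.re_sum, ← trace_sum, hMsum, trace_one, Fintype.card_fin,
        Complex.natCast_re]

end

lemma le_two_rpow_neg_sInf {s : Set ℝ} (hs : BddBelow s) {x : ℝ} (hx : 0 < x)
    (hmem : -Real.logb 2 x ∈ s) : x ≤ 2 ^ (-sInf s) := by
  calc x = 2 ^ Real.logb 2 x := (Real.rpow_logb two_pos (by norm_num) hx).symm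
    _ ≤ 2 ^ (-sInf s) :=
      Real.rpow_le_rpow_of_exponent_le one_le_two (le_neg_of_le_neg (csInf_le hs hmem))

theorem Q_ge_renyi2_EUR {d N : ℕ} (hd : 0 < d) (hN : 0 < N)
    (a : Fin N → Fin d → (Fin d → ℂ)) (ha : ∀ i, IsONB (a i))
    (φs : Fin d → ℂ) (hφs : qinner φs φs = 1)
    (hmax : ∀ φ : Fin d → ℂ, qinner φ φ = 1 →
      ∑ i, ∑ j, ‖qinner φ (a i j)‖ ^ 4 ≤ ∑ i, ∑ j, ‖qinner φs (a i j)‖ ^ 4)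
    (heq : ∀ i i' : Fin N,
      ∑ j, ‖qinner φs (a i j)‖ ^ 4 = ∑ j, ‖qinner φs (a i' j)‖ ^ 4)
    (m : ℕ) (M σ : Fin m → Matrix (Fin d) (Fin d) ℂ)
    (hM : ∀ k, (M k).PosSemidef) (hMsum : ∑ k, M k = 1)
    (hσ : ∀ k, (σ k).PosSemidef) (hσtr : ∀ k, (σ k).trace = 1) :
    (1 / ((N : ℝ) * d)) * ∑ k, ∑ i, ∑ j,
        (qinner (a i j) (M k *ᵥ a i j)).re * (qinner (a i j) (σ k *ᵥ a i j)).re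
      ≤ (2 : ℝ) ^ (-(sInf {x : ℝ | ∃ φ : Fin d → ℂ, qinner φ φ = 1 ∧
          x = (1 / (N : ℝ)) * ∑ i, -Real.logb 2 (∑ j, ‖qinner φ (a i j)‖ ^ 4)})) := by
  let i₀ : Fin N := ⟨0, hN⟩
  set c := ∑ j, ‖qinner φs (a i₀ j)‖ ^ 4
  have hT : ∑ i, ∑ j, ‖qinner φs (a i j)‖ ^ 4 = N * c := by simp [heq _ i₀, c]
  have hF := sum_sum_re_qinner_mulVec_mul_le (v := fun p : Fin N × Fin d => a p.1 p.2)
    (by simpa only [Fintype.sum_prod_type] using hmax) hM hMsum hσ hσtr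
  simp only [Fintype.sum_prod_type, hT] at hF
  calc _ ≤ (1 / ((N : ℝ) * d)) * (d * (N * c)) := by gcongr
    _ = c := by field_simp
    _ ≤ _ := by
      refine le_two_rpow_neg_sInf ⟨0, ?_⟩ ((ha i₀).sum_norm_qinner_pow_four_pos hφs)
        ⟨φs, hφs, by simp [heq _ i₀, c, hN.ne']⟩
      rintro _ ⟨φ, hφ, rfl⟩
      exact mul_nonneg (by positivity) (Finset.sum_nonneg fun i _ => neg_nonneg.mpr <|
        Real.logb_nonpos one_lt_two (by positivity) ((ha i).sum_norm_qinner_pow_four_le_one hφ))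
end
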